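/- arXiv:1304.3481 — 2 statements merged into one kernel-verified Lean document; each statement's English description precedes it below -/
import Mathlib

section
/- Let P̃(a,Q,tr,tc) = a⁴(Q^{−4} + tr²tc⁴ + tr²tc⁶ + Q⁴tr⁴tc⁸) + a⁶(Q^{−2}tr³tc⁵ + Q^{−2}tr³tc⁷ + Q²tr⁵tc⁹ + Q²tr⁵tc¹¹) + a⁸tr⁶tc¹², an element of ℤ[a^{±1}, Q^{±1}, tr^{±1}, tc^{±1}]. Then the specialization Q := q, tr := t, tc := 1 satisfies P̃(a,q,t,1) = (a²q^{−2} + a²q²t² + a⁴t³)² in ℤ[a^{±1}, q^{±1}, t^{±1}]. -/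
/-- The Laurent monomial `a^i * q^j * tr^k * tc^l` (with variables invertible). -/
noncomputable def monoE {R : Type*} [CommRing R] (a q tr tc : Rˣ) (i j k l : ℤ) : R :=
  ((a ^ i * q ^ j * tr ^ k * tc ^ l : Rˣ) : R)

/-- The Laurent monomial `a^i * q^j * t^k`. -/
noncomputable def triE {R : Type*} [CommRing R] (a q t : Rˣ) (i j k : ℤ) : R :=
  ((a ^ i * q ^ j * t ^ k : Rˣ) : R)

/-- Tilde-version of the `S²`-colored homology of the trefoil. -/
noncomputable def PtildeTref {R : Type*} [CommRing R] (a Q tr tc : Rˣ) : R :=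
  monoE a Q tr tc 4 (-4) 0 0 +
    monoE a Q tr tc 4 0 2 4 +
    monoE a Q tr tc 4 0 2 6 +
    monoE a Q tr tc 4 4 4 8 +
    monoE a Q tr tc 6 (-2) 3 5 +
    monoE a Q tr tc 6 (-2) 3 7 +
    monoE a Q tr tc 6 2 5 9 +
    monoE a Q tr tc 6 2 5 11 +
    monoE a Q tr tc 8 0 6 12

section

variable {R : Type*} [CommRing R] (a q t : Rˣ)

theorem monoE_one (i j k l : ℤ) : monoE a q t 1 i j k l = triE a q t i j k := by
  simp only [monoE, triE, one_zpow, mul_one]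

theorem triE_mul (i j k i' j' k' : ℤ) :
    triE a q t i j k * triE a q t i' j' k' = triE a q t (i + i') (j + j') (k + k') := by
  simp only [triE, ← Units.val_mul, zpow_add]
  congr 1
  ac_rfl

end

-- The nine monomials of `PtildeTref` at `tc = 1` are exactly the nine products in the square.
/-- Refined exponential growth for the trefoil, `r = 2`: the specialization
`Q := q`, `tr := t`, `tc := 1` is the square of the uncolored superpolynomial. -/
theorem stmt_9 {R : Type*} [CommRing R] (a q t : Rˣ) :
    PtildeTref a q t 1 =
      (triE a q t 2 (-2) 0 + triE a q t 2 2 2 + triE a q t 4 0 3) ^ 2 := by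
  simp only [PtildeTref, monoE_one, sq, add_mul, mul_add, triE_mul]
  norm_num
  ring
end

section
/- Let P̃(a,Q,tr,tc) = a⁴tr⁴tc⁸ + a²(Q^{−2}tr·tc + Q^{−2}tr·tc³ + tr²tc² + tr²tc⁴ + Q²tr³tc⁵ + Q²tr³tc⁷) + (Q^{−4}tr^{−2}tc^{−4} + Q^{−2}tr^{−1}tc^{−3} + Q^{−2}tr^{−1}tc^{−1} + tc^{−2} + 3 + tc² + Q²tr·tc + Q²tr·tc³ + Q⁴tr²tc⁴) + a^{−2}(Q^{−2}tr^{−3}tc^{−7} + Q^{−2}tr^{−3}tc^{−5} + tr^{−2}tc^{−4} + tr^{−2}tc^{−2} + Q²tr^{−1}tc^{−3} + Q²tr^{−1}tc^{−1}) + a^{−4}tr^{−4}tc^{−8}, an element of ℤ[a^{±1}, Q^{±1}, tr^{±1}, tc^{±1}]. Then the specialization Q := q, tr := t, tc := 1 satisfies P̃(a,q,t,1) = (a²t² + q^{−2}t^{−1} + 1 + q²t + a^{−2}t^{−2})² in ℤ[a^{±1}, q^{±1}, t^{±1}]. -/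
/-- The Laurent monomial `a^i * q^j * tr^k * tc^l` (with variables invertible). -/
noncomputable def monoH {R : Type*} [CommRing R] (a q tr tc : Rˣ) (i j k l : ℤ) : R :=
  ((a ^ i * q ^ j * tr ^ k * tc ^ l : Rˣ) : R)

/-- The Laurent monomial `a^i * q^j * t^k`. -/
noncomputable def triH {R : Type*} [CommRing R] (a q t : Rˣ) (i j k : ℤ) : R :=
  ((a ^ i * q ^ j * t ^ k : Rˣ) : R)

/-- Tilde-version of the quadruply-graded `S²`-colored homology of the figure-eight knot. -/
noncomputable def PtildeFigEight {R : Type*} [CommRing R] (a Q tr tc : Rˣ) : R :=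
  monoH a Q tr tc 4 0 4 8 +
    monoH a Q tr tc 2 (-2) 1 1 +
    monoH a Q tr tc 2 (-2) 1 3 +
    monoH a Q tr tc 2 0 2 2 +
    monoH a Q tr tc 2 0 2 4 +
    monoH a Q tr tc 2 2 3 5 +
    monoH a Q tr tc 2 2 3 7 +
    monoH a Q tr tc 0 (-4) (-2) (-4) +
    monoH a Q tr tc 0 (-2) (-1) (-3) +
    monoH a Q tr tc 0 (-2) (-1) (-1) +
    monoH a Q tr tc 0 0 0 (-2) +
    3 * monoH a Q tr tc 0 0 0 0 +
    monoH a Q tr tc 0 0 0 2 +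
    monoH a Q tr tc 0 2 1 1 +
    monoH a Q tr tc 0 2 1 3 +
    monoH a Q tr tc 0 4 2 4 +
    monoH a Q tr tc (-2) (-2) (-3) (-7) +
    monoH a Q tr tc (-2) (-2) (-3) (-5) +
    monoH a Q tr tc (-2) 0 (-2) (-4) +
    monoH a Q tr tc (-2) 0 (-2) (-2) +
    monoH a Q tr tc (-2) 2 (-1) (-3) +
    monoH a Q tr tc (-2) 2 (-1) (-1) +
    monoH a Q tr tc (-4) 0 (-4) (-8)

/-!
At `tc = 1` both sides are Laurent polynomials in `a, q, t`. Multiplying by the unit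
`a⁴q⁴t⁸ = (a²q²t⁴)²` clears every negative exponent, and the resulting identity of ordinary
polynomials is checked by `ring`.
-/

section
variable {R : Type*} [CommRing R] (a q t : Rˣ)

lemma monoH_one_right (i j k l : ℤ) : monoH a q t 1 i j k l = triH a q t i j k := by
  simp only [monoH, triH, one_zpow, mul_one]

lemma triH_mul_triH (i j k i' j' k' : ℤ) :
    triH a q t i j k * triH a q t i' j' k' = triH a q t (i + i') (j + j') (k + k') := by
  simp only [triH, ← Units.val_mul, zpow_add]
  congr 1
  ac_rfl

end

/-- Refined exponential growth for the figure-eight knot, `r = 2`. -/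
theorem stmt_13 {R : Type*} [CommRing R] (a q t : Rˣ) :
    PtildeFigEight a q t 1 =
      (triH a q t 2 0 2 + triH a q t 0 (-2) (-1) + 1 + triH a q t 0 2 1 +
          triH a q t (-2) 0 (-2)) ^ 2 := by
  set w := triH a q t 2 2 4
  have hw : IsUnit (w * w) := (Units.isUnit _).mul (Units.isUnit _)
  refine hw.mul_left_cancel ?_
  rw [show ∀ x : R, w * w * x ^ 2 = (w * x) ^ 2 from fun x => by ring]
  simp only [PtildeFigEight, monoH_one_right, mul_add, mul_one, mul_left_comm _ (3 : R), w,
    triH_mul_triH, Int.reduceAdd, Int.reduceNeg]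
  simp only [triH, zpow_ofNat, Units.val_mul, Units.val_pow_eq_pow_val]
  ring
end
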